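/- Let X = {−1,0,1}² and let f : X → ℝ satisfy f(0,x₂) = 1 and f(−1,x₂) = f(1,x₂) = 0 for all x₂ ∈ {−1,0,1}. Then for every fully connected binarized neural network with one hidden layer and input dimension 2, with output function O, one has sup_{x ∈ X} |O(x) − f(x)| ≥ 1/2. -/

import Mathlib

/-!
For a hidden neuron with weights `w₁, w₂ ∈ {±1}`, the pre-activations at `(0, ±1)` are `±w₂`
and at `(±1, 0)` are `±w₁`; both pairs are `{1, -1}`, so every neuron, and hence the network,
satisfies `O(0,1) + O(0,-1) = O(1,0) + O(-1,0)`. The target has `f(0,±1) = 1` and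
`f(±1,0) = 0`, so the four errors at these points sum to at least `2` and one of them is at
least `1/2`.
-/

/-- The binarized activation function with threshold `θ`:
`σ θ t = 1` if `t > θ`, and `-1` otherwise. -/
noncomputable def binAct (θ t : ℝ) : ℝ := if t > θ then 1 else -1

noncomputable def bnnOutput {d ι : Type*} [Fintype d] [Fintype ι]
    (W : d → ι → ℝ) (θ v : ι → ℝ) (x : d → ℝ) : ℝ :=
  ∑ j, v j * binAct (θ j) (∑ i, W i j * x i)

lemma binAct_add_binAct_neg (θ t : ℝ) :
    binAct θ t + binAct θ (-t) = binAct θ |t| + binAct θ (-|t|) := by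
  rcases abs_choice t with h | h <;> rw [h]
  rw [neg_neg, add_comm]

section Network

variable {d ι : Type*} [Fintype d] [Fintype ι] (W : d → ι → ℝ) (θ v : ι → ℝ)

lemma bnnOutput_add_neg_eq_of_abs_eq {x y : d → ℝ}
    (h : ∀ j, |∑ i, W i j * x i| = |∑ i, W i j * y i|) :
    bnnOutput W θ v x + bnnOutput W θ v (-x) = bnnOutput W θ v y + bnnOutput W θ v (-y) := by
  simp only [bnnOutput, ← Finset.sum_add_distrib, ← mul_add]
  refine Finset.sum_congr rfl fun j _ => ?_
  simp only [Pi.neg_apply, mul_neg, Finset.sum_neg_distrib]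
  rw [binAct_add_binAct_neg, binAct_add_binAct_neg _ (∑ i, W i j * y i), h]

lemma bnnOutput_add_neg_single_eq [DecidableEq d] (hW : ∀ i j, W i j = 1 ∨ W i j = -1)
    (i k : d) :
    bnnOutput W θ v (Pi.single i 1) + bnnOutput W θ v (-Pi.single i 1) =
      bnnOutput W θ v (Pi.single k 1) + bnnOutput W θ v (-Pi.single k 1) := by
  have abs_weight : ∀ i j, |W i j| = 1 := fun i j => by
    rcases hW i j with h | h <;> simp [h]
  refine bnnOutput_add_neg_eq_of_abs_eq W θ v fun j => ?_
  simp only [Pi.single_apply, mul_ite, mul_one, mul_zero, Finset.sum_ite_eq', Finset.mem_univ,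
    if_true, abs_weight]

end Network

lemma two_le_abs_sub_one_add_abs {a b c e : ℝ} (h : a + b = c + e) :
    2 ≤ |a - 1| + |b - 1| + |c| + |e| := by
  cases abs_cases (a - 1) <;> cases abs_cases (b - 1) <;> cases abs_cases c <;>
    cases abs_cases e <;> linarith

lemma finite_tertiary_grid (d : Type*) [Finite d] :
    {x : d → ℝ | ∀ i, x i ∈ ({-1, 0, 1} : Set ℝ)}.Finite :=
  (Set.Finite.pi fun _ => Set.toFinite _).subset fun _ hx i _ => hx i

/-- **Negative result for single-hidden-layer fully connected BNNs on tertiary inputs.**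
Let `X = {−1,0,1}²` and let `f : X → ℝ` satisfy `f (0, x₂) = 1` and
`f (−1, x₂) = f (1, x₂) = 0` for all `x₂ ∈ {−1,0,1}`. Then for every fully connected
single-hidden-layer BNN with input dimension `2` (binary hidden weights `W`, thresholds
`θ`, real output weights `v`) with output `O`, one has
`sup_{x ∈ X} |O x − f x| ≥ 1/2`. -/
theorem bnn_one_hidden_layer_cannot_approximate_tertiary
    (f : (Fin 2 → ℝ) → ℝ)
    (hf : ∀ x₂ : ℝ, x₂ ∈ ({-1, 0, 1} : Set ℝ) →
      f ![0, x₂] = 1 ∧ f ![-1, x₂] = 0 ∧ f ![1, x₂] = 0)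
    (n : ℕ) (W : Fin 2 → Fin n → ℝ) (θ : Fin n → ℝ) (v : Fin n → ℝ)
    (hW : ∀ i j, W i j = 1 ∨ W i j = -1)
    (O : (Fin 2 → ℝ) → ℝ)
    (hO : ∀ x, O x = ∑ j, v j * binAct (θ j) (∑ i, W i j * x i)) :
    1 / 2 ≤ sSup ((fun x => |O x - f x|) '' {x | ∀ i, x i ∈ ({-1, 0, 1} : Set ℝ)}) := by
  set X : Set (Fin 2 → ℝ) := {x | ∀ i, x i ∈ ({-1, 0, 1} : Set ℝ)}
  have hO : O = bnnOutput W θ v := funext hO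
  have le_sup : ∀ a b : ℝ, a ∈ ({-1, 0, 1} : Set ℝ) → b ∈ ({-1, 0, 1} : Set ℝ) →
      |O ![a, b] - f ![a, b]| ≤ sSup ((fun x => |O x - f x|) '' X) := fun a b ha hb =>
    le_csSup ((finite_tertiary_grid _).image _).bddAbove
      ⟨![a, b], fun i => by fin_cases i <;> simpa, rfl⟩
  have key : O ![0, 1] + O ![0, -1] = O ![1, 0] + O ![-1, 0] := by
    have e₀ : (Pi.single 0 1 : Fin 2 → ℝ) = ![1, 0] := by ext i; fin_cases i <;> simp
    have e₁ : (Pi.single 1 1 : Fin 2 → ℝ) = ![0, 1] := by ext i; fin_cases i <;> simp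
    simpa [hO, e₀, e₁] using bnnOutput_add_neg_single_eq W θ v hW 1 0
  have errors_sum := two_le_abs_sub_one_add_abs key
  obtain ⟨f01, -, -⟩ := hf 1 (by simp)
  obtain ⟨f0m, -, -⟩ := hf (-1) (by simp)
  obtain ⟨-, fm0, f10⟩ := hf 0 (by simp)
  have e01 := le_sup 0 1 (by simp) (by simp)
  have e0m := le_sup 0 (-1) (by simp) (by simp)
  have e10 := le_sup 1 0 (by simp) (by simp)
  have em0 := le_sup (-1) 0 (by simp) (by simp)
  rw [f01] at e01
  rw [f0m] at e0m
  rw [f10, sub_zero] at e10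
  rw [fm0, sub_zero] at em0
  linarith
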